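/- The divergences of the reference Fortin–Soulie bubble fields span exactly the zero-mean affine functions: the set {a ∂₁φ + b ∂₂φ : a, b ∈ ℝ} is equal to the set of all polynomial functions q : ℝ² → ℝ of total degree at most 1 with ∫_{T̂} q(x) dx = 0. -/

import Mathlib

open MeasureTheory
open scoped MeasureTheory

noncomputable section

abbrev E2 : Type := EuclideanSpace ℝ (Fin 2)

/-- The point `(a, b)` in `ℝ²`. -/
def pt (a b : ℝ) : E2 := !₂[a, b]

/-- The closed reference triangle with vertices `(0,0)`, `(1,0)`, `(0,1)`. -/
def refT : Set E2 := {x : E2 | 0 ≤ x 0 ∧ 0 ≤ x 1 ∧ x 0 + x 1 ≤ 1}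

/-- The Fortin–Soulie bubble function. -/
def phi (x : E2) : ℝ := 2 - 3 * ((1 - x 0 - x 1) ^ 2 + (x 0) ^ 2 + (x 1) ^ 2)

/-- `i`-th partial derivative of a scalar function. -/
def dphi (i : Fin 2) (x : E2) : ℝ := fderiv ℝ phi x (EuclideanSpace.single i 1)

/-- `f` is (the evaluation map of) a polynomial of total degree at most `n`. -/
def IsPolyDeg (n : ℕ) (f : E2 → ℝ) : Prop :=
  ∃ p : MvPolynomial (Fin 2) ℝ, p.totalDegree ≤ n ∧
    ∀ x : E2, f x = MvPolynomial.eval (fun i => x i) p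

/-- Each component of `w` is a polynomial of total degree at most `n`. -/
def IsPolyVec (n : ℕ) (w : E2 → E2) : Prop :=
  ∀ i : Fin 2, IsPolyDeg n (fun x => w x i)

/-- The bubble vector field `(a φ, b φ)`. -/
def bub (a b : ℝ) (x : E2) : E2 := pt (a * phi x) (b * phi x)

/-- Jacobian determinant. -/
def jdet (F : E2 → E2) (x : E2) : ℝ := LinearMap.det (fderiv ℝ F x : E2 →ₗ[ℝ] E2)

/-- Piola transform matrix `A(x) = DF(x)/det DF(x)` as a continuous linear map. -/
def piola (F : E2 → E2) (x : E2) : E2 →L[ℝ] E2 := (jdet F x)⁻¹ • fderiv ℝ F x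

/-- Divergence: trace of the Jacobian. -/
def divg (f : E2 → E2) (x : E2) : ℝ :=
  LinearMap.trace ℝ E2 (fderiv ℝ f x : E2 →ₗ[ℝ] E2)

/-- `(K,h)`-admissible map. -/
def IsAdmissible (K h : ℝ) (F : E2 → E2) : Prop :=
  IsPolyVec 2 F ∧ Set.InjOn F refT ∧
  ∀ x ∈ refT, ∃ e : E2 ≃L[ℝ] E2,
    (e : E2 →L[ℝ] E2) = fderiv ℝ F x ∧
    ‖(e : E2 →L[ℝ] E2)‖ ≤ K * h ∧
    ‖(e.symm : E2 →L[ℝ] E2)‖ ≤ K * h⁻¹ ∧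
    ‖fderiv ℝ (fderiv ℝ F) x‖ ≤ K * h ^ 2 ∧
    K⁻¹ * h ^ 2 ≤ jdet F x ∧ jdet F x ≤ K * h ^ 2

/-- The six quadratic Lagrange nodes of the reference triangle. -/
def nodes : Set E2 :=
  {pt 0 0, pt 1 0, pt 0 1, pt (1/2) 0, pt (1/2) (1/2), pt 0 (1/2)}

/-- `(P, Q)` are the endpoints of an edge of the reference triangle. -/
def IsEdgePair (P Q : E2) : Prop :=
  (P = pt 0 0 ∧ Q = pt 1 0) ∨ (P = pt 0 0 ∧ Q = pt 0 1) ∨ (P = pt 1 0 ∧ Q = pt 0 1)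

/-- Sobolev seminorm `|v|_{W^{m,p}(S)}`. -/
def sobSemi (m : ℕ) (p : ℝ) (S : Set E2) (v : E2 → E2) : ℝ :=
  (∫ x in S, ‖iteratedFDeriv ℝ m v x‖ ^ p) ^ (1 / p)

/-! The partial derivatives of `φ` are the affine functions `6 - 12x₁ - 6x₂` and `6 - 6x₁ - 12x₂`,
and an affine function `c₀ + c₁x₁ + c₂x₂` integrates over `T̂` to `c₀/2 + c₁/6 + c₂/6`. Hence
`a ∂₁φ + b ∂₂φ` has zero mean, and conversely the zero-mean condition `3c₀ + c₁ + c₂ = 0` cuts out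
a plane in the three-dimensional space of affine functions, which the two independent functions
`∂₁φ, ∂₂φ` span. -/

namespace MvPolynomial

open Finsupp

variable {σ R : Type*} [Fintype σ] [CommSemiring R]

theorem eq_C_add_sum_C_mul_X_of_totalDegree_le_one {p : MvPolynomial σ R}
    (hp : p.totalDegree ≤ 1) :
    p = C (coeff 0 p) + ∑ i, C (coeff (single i 1) p) * X i := by
  classical
  ext d
  simp only [coeff_add, coeff_C, coeff_sum, coeff_C_mul, coeff_X, mul_ite, mul_one, mul_zero]
  rcases (by omega : d.degree = 0 ∨ d.degree = 1 ∨ 1 < d.degree) with hd | hd | hd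
  · obtain rfl := (degree_eq_zero_iff d).mp hd
    simp
  · obtain ⟨a, rfl⟩ : d ∈ Set.range (fun a : σ ↦ single a 1) := by
      rwa [range_single_one]
    simp [single_left_inj one_ne_zero, eq_comm (a := (0 : σ →₀ ℕ))]
  · have hsingle : ∀ i, single i 1 ≠ d := fun i h ↦ by simp [← h] at hd
    have hzero : (0 : σ →₀ ℕ) ≠ d := by rintro rfl; simp at hd
    rw [coeff_eq_zero_of_totalDegree_lt (hp.trans_lt hd)]
    simp [hsingle, hzero]

theorem totalDegree_C_add_sum_C_mul_X_le_one (c₀ : R) (c : σ → R) :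
    (C c₀ + ∑ i, C (c i) * X i : MvPolynomial σ R).totalDegree ≤ 1 :=
  (totalDegree_add _ _).trans <| max_le (by simp) <|
    (IsHomogeneous.sum _ _ _ fun i _ ↦ isHomogeneous_C_mul_X (c i) i).totalDegree_le

end MvPolynomial

open MvPolynomial in
theorem isPolyDeg_one_iff {f : E2 → ℝ} :
    IsPolyDeg 1 f ↔ ∃ c₀ c₁ c₂ : ℝ, f = fun x ↦ c₀ + c₁ * x 0 + c₂ * x 1 := by
  constructor
  · rintro ⟨p, hp, hf⟩
    rw [eq_C_add_sum_C_mul_X_of_totalDegree_le_one hp] at hf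
    refine ⟨coeff 0 p, coeff (Finsupp.single 0 1) p, coeff (Finsupp.single 1 1) p,
      funext fun x ↦ (hf x).trans ?_⟩
    simp [Fin.sum_univ_two, add_assoc]
  · rintro ⟨c₀, c₁, c₂, rfl⟩
    refine ⟨_, totalDegree_C_add_sum_C_mul_X_le_one c₀ ![c₁, c₂], fun x ↦ ?_⟩
    simp [Fin.sum_univ_two, add_assoc]

theorem hasFDerivAt_phi (x : E2) :
    HasFDerivAt phi ((6 - 12 * x 0 - 6 * x 1) • EuclideanSpace.proj (0 : Fin 2) +
      (6 - 6 * x 0 - 12 * x 1) • EuclideanSpace.proj (1 : Fin 2) : E2 →L[ℝ] ℝ) x := by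
  have h₀ := (EuclideanSpace.proj (𝕜 := ℝ) (0 : Fin 2)).hasFDerivAt (x := x)
  have h₁ := (EuclideanSpace.proj (𝕜 := ℝ) (1 : Fin 2)).hasFDerivAt (x := x)
  refine ((((((h₀.const_sub 1).sub h₁).pow 2).add (h₀.pow 2)).add (h₁.pow 2)).const_mul 3
    |>.const_sub 2).congr_fderiv ?_
  ext v
  simp
  ring

theorem dphi_zero (x : E2) : dphi 0 x = 6 - 12 * x 0 - 6 * x 1 := by
  simp [dphi, (hasFDerivAt_phi x).fderiv]

theorem dphi_one (x : E2) : dphi 1 x = 6 - 6 * x 0 - 12 * x 1 := by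
  simp [dphi, (hasFDerivAt_phi x).fderiv]

section Integration

open Set

theorem intervalIntegral_affine (a b u : ℝ) :
    ∫ t in (0 : ℝ)..u, (a + b * t) = a * u + b * u ^ 2 / 2 := by
  rw [intervalIntegral.integral_add (Continuous.intervalIntegrable (by fun_prop) _ _)
    (Continuous.intervalIntegrable (by fun_prop) _ _), intervalIntegral.integral_const_mul,
    integral_id]
  simp
  ring

theorem intervalIntegral_quadratic (a b c u : ℝ) :
    ∫ t in (0 : ℝ)..u, (a + b * t + c * t ^ 2) = a * u + b * u ^ 2 / 2 + c * u ^ 3 / 3 := by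
  rw [intervalIntegral.integral_add (Continuous.intervalIntegrable (by fun_prop) _ _)
    (Continuous.intervalIntegrable (by fun_prop) _ _), intervalIntegral_affine,
    intervalIntegral.integral_const_mul, integral_pow]
  ring

def unitTriangle : Set (ℝ × ℝ) := {p | 0 ≤ p.1 ∧ 0 ≤ p.2 ∧ p.1 + p.2 ≤ 1}

theorem isClosed_unitTriangle : IsClosed unitTriangle :=
  (isClosed_le continuous_const continuous_fst).inter <|
    (isClosed_le continuous_const continuous_snd).inter <|
      isClosed_le (continuous_fst.add continuous_snd) continuous_const

theorem isCompact_unitTriangle : IsCompact unitTriangle :=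
  (isCompact_Icc (a := (0, 0)) (b := (1, 1))).of_isClosed_subset isClosed_unitTriangle
    fun _ ⟨h₁, h₂, h₁₂⟩ ↦ ⟨Prod.mk_le_mk.2 ⟨h₁, h₂⟩, Prod.mk_le_mk.2 ⟨by linarith, by linarith⟩⟩

theorem integral_indicator_unitTriangle_slice (g : ℝ × ℝ → ℝ) (s : ℝ) :
    ∫ t, unitTriangle.indicator g (s, t) =
      (Icc 0 1).indicator (fun s ↦ ∫ t in (0)..(1 - s), g (s, t)) s := by
  by_cases hs : s ∈ Icc (0 : ℝ) 1
  · rw [indicator_of_mem hs, intervalIntegral.integral_of_le (by linarith [hs.2]),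
      ← integral_Icc_eq_integral_Ioc, ← integral_indicator measurableSet_Icc]
    congr 1 with t
    simp only [indicator_apply, unitTriangle, mem_ofPred_eq, mem_Icc]
    congr 1
    exact propext ⟨fun h ↦ ⟨h.2.1, by linarith⟩, fun h ↦ ⟨hs.1, h.1, by linarith⟩⟩
  · rw [indicator_of_notMem hs, ← integral_zero ℝ ℝ]
    congr 1 with t
    exact indicator_of_notMem (fun h ↦ hs ⟨h.1, by linarith [h.2.1, h.2.2]⟩) _

theorem setIntegral_unitTriangle {g : ℝ × ℝ → ℝ} (hg : Continuous g) :
    ∫ p in unitTriangle, g p = ∫ s in (0 : ℝ)..1, ∫ t in (0)..(1 - s), g (s, t) := by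
  have hmeas := isClosed_unitTriangle.measurableSet
  have hint : Integrable (unitTriangle.indicator g) (volume.prod volume) :=
    (integrable_indicator_iff hmeas).2 (hg.continuousOn.integrableOn_compact isCompact_unitTriangle)
  rw [← integral_indicator hmeas, Measure.volume_eq_prod, integral_prod _ hint]
  simp_rw [integral_indicator_unitTriangle_slice]
  rw [integral_indicator measurableSet_Icc, integral_Icc_eq_integral_Ioc,
    intervalIntegral.integral_of_le zero_le_one]

theorem setIntegral_refT_eq_unitTriangle (g : ℝ × ℝ → ℝ) :
    ∫ x in refT, g (x 0, x 1) = ∫ p in unitTriangle, g p := by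
  let e : E2 ≃ᵐ ℝ × ℝ :=
    (MeasurableEquiv.toLp 2 (Fin 2 → ℝ)).symm.trans (MeasurableEquiv.piFinTwo fun _ ↦ ℝ)
  have he : MeasurePreserving e :=
    (volume_preserving_piFinTwo fun _ ↦ ℝ).comp
      (EuclideanSpace.volume_preserving_symm_measurableEquiv_toLp (Fin 2))
  exact he.setIntegral_preimage_emb e.measurableEmbedding g unitTriangle

theorem setIntegral_refT_affine (c₀ c₁ c₂ : ℝ) :
    ∫ x in refT, (c₀ + c₁ * x 0 + c₂ * x 1) = c₀ / 2 + c₁ / 6 + c₂ / 6 := by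
  rw [setIntegral_refT_eq_unitTriangle (fun p ↦ c₀ + c₁ * p.1 + c₂ * p.2),
    setIntegral_unitTriangle (by fun_prop)]
  simp only [intervalIntegral_affine]
  calc _ = ∫ s in (0 : ℝ)..1, ((c₀ + c₂ / 2) + (c₁ - c₀ - c₂) * s + (c₂ / 2 - c₁) * s ^ 2) := by
        congr 1 with s
        ring
    _ = _ := by
        rw [intervalIntegral_quadratic]
        ring

end Integration

/-- the divergences of the reference Fortin–Soulie bubble fields
span exactly the zero-mean affine functions. -/
theorem stmt0 :
    {f : E2 → ℝ | ∃ a b : ℝ, f = fun x => a * dphi 0 x + b * dphi 1 x} =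
      {q : E2 → ℝ | IsPolyDeg 1 q ∧ (∫ x in refT, q x) = 0} := by
  ext f
  simp only [Set.mem_ofPred_eq, isPolyDeg_one_iff]
  constructor
  · rintro ⟨a, b, rfl⟩
    have hf : (fun x : E2 ↦ a * dphi 0 x + b * dphi 1 x) =
        fun x ↦ 6 * (a + b) + -(12 * a + 6 * b) * x 0 + -(6 * a + 12 * b) * x 1 := by
      funext x
      rw [dphi_zero, dphi_one]
      ring
    refine ⟨⟨_, _, _, hf⟩, ?_⟩
    rw [hf, setIntegral_refT_affine]
    ring
  · rintro ⟨⟨c₀, c₁, c₂, rfl⟩, hmean⟩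
    rw [setIntegral_refT_affine] at hmean
    -- solve `-(12a + 6b) = c₁`, `-(6a + 12b) = c₂`; then `6(a + b) = c₀` by `3c₀ + c₁ + c₂ = 0`
    refine ⟨(c₂ - 2 * c₁) / 18, (c₁ - 2 * c₂) / 18, funext fun x ↦ ?_⟩
    rw [dphi_zero, dphi_one]
    linear_combination 2 * hmean
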